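/- arXiv:2505.13372 — 4 statements merged into one kernel-verified Lean document; each statement's English description precedes it below -/
import Mathlib

section
/- Consider a deterministic transition system on a type S with step relation step : S → S → Prop and goal set G ⊆ S, and let γ be a real number with 0 < γ < 1. For every state s with D(s) ≠ ∅, one has Real.logb γ (V_bin*(s)) + 1 = (sInf D(s) : ℝ); that is, the optimal distance heuristic satisfies h*(s) = log_γ(V_bin*(s)) + 1 whenever V_bin*(s) > 0. (Equation (1) of the paper, in the case where the goal is reachable.) -/
/-- `s` reaches the goal set `G` in exactly `n` steps of the relation `step`. -/
def ReachesIn {S : Type*} (step : S → S → Prop) (G : Set S) (s : S) (n : ℕ) : Prop :=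
  ∃ f : Fin (n + 1) → S, f 0 = s ∧
    (∀ i : Fin n, step (f i.castSucc) (f i.succ)) ∧ f (Fin.last n) ∈ G

/-- `D(s)`: the set of numbers of steps in which `s` can reach the goal. -/
def DistSet {S : Type*} (step : S → S → Prop) (G : Set S) (s : S) : Set ℕ :=
  {n | ReachesIn step G s n}

/-- The optimal distance heuristic `h*`, valued in `ℕ∞` (`⊤` if the goal is unreachable). -/
noncomputable def hStar {S : Type*} (step : S → S → Prop) (G : Set S) (s : S) : ℕ∞ :=
  sInf ((fun n : ℕ => (n : ℕ∞)) '' DistSet step G s)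

/-- The optimal binary-reward value `V_bin*` (meaningful on states with `D(s) ≠ ∅`). -/
noncomputable def Vbin {S : Type*} (step : S → S → Prop) (G : Set S) (γ : ℝ) (s : S) : ℝ :=
  sSup {x : ℝ | ∃ n ∈ DistSet step G s, x = γ ^ ((n : ℤ) - 1)}

/-- The optimal counting-reward value `V_cnt*`, valued in `EReal`. -/
noncomputable def Vcnt {S : Type*} (step : S → S → Prop) (G : Set S) (s : S) : EReal :=
  sSup {x : EReal | ∃ n ∈ DistSet step G s, x = -(n : EReal)}

theorem stmt_1 {S : Type*} (step : S → S → Prop) (G : Set S) (γ : ℝ)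
    (hγ0 : 0 < γ) (hγ1 : γ < 1) (s : S) (hs : (DistSet step G s).Nonempty) :
    Real.logb γ (Vbin step G γ s) + 1 = (((sInf (DistSet step G s) : ℕ)) : ℝ) := by
  set D := DistSet step G s with hD
  set m := sInf D with hm
  have hmem : m ∈ D := Nat.sInf_mem hs
  have hval : Vbin step G γ s = γ ^ ((m : ℤ) - 1) := by
    apply IsGreatest.csSup_eq
    constructor
    · exact ⟨m, hmem, rfl⟩
    · rintro x ⟨n, hn, rfl⟩
      have hmn : m ≤ n := Nat.sInf_le hn
      exact zpow_le_zpow_right_of_le_one₀ hγ0 hγ1.le (by omega)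
  have hlog : Real.log γ ≠ 0 := by
    have := Real.log_neg hγ0 hγ1
    linarith
  rw [hval, Real.logb, Real.log_zpow, mul_div_assoc, div_self hlog, mul_one]
  push_cast
  ring
end

section
/- Consider a deterministic transition system on a type S with step relation step : S → S → Prop and goal set G ⊆ S, and let γ be a real number with 0 < γ < 1. For any two states s, s' with D(s) ≠ ∅ and D(s') ≠ ∅: if V_bin*(s) < V_bin*(s'), then h*(s') < h*(s) (i.e. sInf D(s') < sInf D(s)). Consequently, the function u_bin(s) = −V_bin*(s) is a valid search-state ranking: smaller optimal distance to the goal corresponds to smaller ranking value. -/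
lemma Vbin_eq_aux {S : Type*} (step : S → S → Prop) (G : Set S) (γ : ℝ)
    (hγ0 : 0 < γ) (hγ1 : γ < 1) (s : S) (hs : (DistSet step G s).Nonempty) :
    Vbin step G γ s = γ ^ (((sInf (DistSet step G s) : ℕ) : ℤ) - 1) := by
  have hmem := Nat.sInf_mem hs
  apply le_antisymm
  · apply csSup_le
    · obtain ⟨n, hn⟩ := hs; exact ⟨_, n, hn, rfl⟩
    · rintro x ⟨n, hn, rfl⟩
      exact zpow_le_zpow_right_of_le_one₀ hγ0 hγ1.le (by
        have := Nat.sInf_le hn; omega)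
  · apply le_csSup
    · refine ⟨γ ^ (((sInf (DistSet step G s) : ℕ) : ℤ) - 1), ?_⟩
      rintro x ⟨n, hn, rfl⟩
      exact zpow_le_zpow_right_of_le_one₀ hγ0 hγ1.le (by
        have := Nat.sInf_le hn; omega)
    · exact ⟨_, hmem, rfl⟩

theorem stmt_5 {S : Type*} (step : S → S → Prop) (G : Set S) (γ : ℝ)
    (hγ0 : 0 < γ) (hγ1 : γ < 1) (s s' : S)
    (hs : (DistSet step G s).Nonempty) (hs' : (DistSet step G s').Nonempty)
    (hV : Vbin step G γ s < Vbin step G γ s') :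
    sInf (DistSet step G s') < sInf (DistSet step G s) := by
  rw [Vbin_eq_aux step G γ hγ0 hγ1 s hs, Vbin_eq_aux step G γ hγ0 hγ1 s' hs'] at hV
  have := (zpow_lt_zpow_iff_right_of_lt_one₀ hγ0 hγ1).mp hV
  omega
end

section
/- (Bellman equation for the optimal distance heuristic.) Consider a deterministic transition system on a type S with step relation step : S → S → Prop and goal set G ⊆ S. For every state s ∉ G, the optimal distance heuristic satisfies h*(s) = 1 + ⨅_{s' such that step s s'} h*(s'), where the infimum over successors is computed in ℕ∞ (so it equals ⊤, and hence h*(s) = ⊤, when s has no successor or no successor can reach the goal). -/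
lemma reachesIn_zero {S : Type*} (step : S → S → Prop) (G : Set S) (s : S) :
    ReachesIn step G s 0 ↔ s ∈ G := by
  constructor
  · rintro ⟨f, h0, _, hl⟩
    rwa [show Fin.last 0 = 0 from rfl, h0] at hl
  · intro h
    exact ⟨fun _ => s, rfl, fun i => i.elim0, h⟩

lemma reachesIn_succ_iff {S : Type*} (step : S → S → Prop) (G : Set S) (s : S) (n : ℕ) :
    ReachesIn step G s (n + 1) ↔ ∃ s', step s s' ∧ ReachesIn step G s' n := by
  constructor
  · rintro ⟨f, h0, hstep, hl⟩
    refine ⟨f 1, ?_, fun i => f i.succ, rfl, fun i => ?_, ?_⟩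
    · have := hstep 0
      simpa [h0] using this
    · have := hstep i.succ
      rwa [← Fin.succ_castSucc] at this
    · show f (Fin.last n).succ ∈ G
      rwa [Fin.succ_last]
  · rintro ⟨s', hss', f, h0, hstep, hl⟩
    refine ⟨Fin.cons s f, by simp, fun i => ?_, ?_⟩
    · refine Fin.cases ?_ (fun j => ?_) i
      · simpa [h0] using hss'
      · rw [← Fin.succ_castSucc]
        simpa using hstep j
    · rw [← Fin.succ_last]
      simpa using hl

theorem stmt_7 {S : Type*} (step : S → S → Prop) (G : Set S) (s : S) (hs : s ∉ G) :
    hStar step G s = 1 + ⨅ (s' : S) (_ : step s s'), hStar step G s' := by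
  have himg : (⨅ (s' : S) (_ : step s s'), hStar step G s')
      = sInf (hStar step G '' {s' | step s s'}) := by
    rw [sInf_image]
    rfl
  refine le_antisymm ?_ ?_
  · rcases eq_or_ne (⨅ (s' : S) (_ : step s s'), hStar step G s') ⊤ with h | h
    · simp [h]
    · have hne : (hStar step G '' {s' | step s s'}).Nonempty := by
        by_contra hempty
        rw [Set.not_nonempty_iff_eq_empty] at hempty
        rw [himg, hempty, sInf_empty] at h
        exact h rfl
      have hmem := csInf_mem hne
      obtain ⟨s', hss', heq⟩ := hmem
      rcases eq_or_ne (hStar step G s') ⊤ with ht | ht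
      · rw [himg, ← heq, ht] at h
        exact absurd rfl h
      · have hne2 : ((fun n : ℕ => (n : ℕ∞)) '' DistSet step G s').Nonempty := by
          by_contra hempty
          rw [Set.not_nonempty_iff_eq_empty] at hempty
          rw [hStar, hempty, sInf_empty] at ht
          exact ht rfl
        obtain ⟨n, hn, hcast⟩ := csInf_mem hne2
        have hstar' : hStar step G s' = (n : ℕ∞) := hcast.symm
        have hreach : ReachesIn step G s (n + 1) :=
          (reachesIn_succ_iff step G s n).2 ⟨s', hss', hn⟩
        have hle : hStar step G s ≤ ((n + 1 : ℕ) : ℕ∞) :=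
          sInf_le ⟨n + 1, hreach, rfl⟩
        calc hStar step G s ≤ ((n + 1 : ℕ) : ℕ∞) := hle
          _ = 1 + (n : ℕ∞) := by push_cast; ring
          _ = 1 + hStar step G s' := by rw [hstar']
          _ = 1 + ⨅ (s' : S) (_ : step s s'), hStar step G s' := by
              rw [himg, ← heq]
  · refine le_sInf ?_
    rintro x ⟨n, hn, rfl⟩
    cases n with
    | zero => exact absurd ((reachesIn_zero step G s).1 hn) hs
    | succ m =>
      obtain ⟨s', hss', hm⟩ := (reachesIn_succ_iff step G s m).1 hn
      have h1 : (⨅ (s' : S) (_ : step s s'), hStar step G s') ≤ hStar step G s' :=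
        iInf₂_le s' hss'
      have h2 : hStar step G s' ≤ (m : ℕ∞) := sInf_le ⟨m, hm, rfl⟩
      calc 1 + (⨅ (s' : S) (_ : step s s'), hStar step G s')
          ≤ 1 + (m : ℕ∞) := by exact add_le_add_right (h1.trans h2) 1
        _ = ((m + 1 : ℕ) : ℕ∞) := by push_cast; ring
end

section
/- (Bellman equation for the binary-reward value function.) Consider a deterministic transition system on a type S with step relation step : S → S → Prop and goal set G ⊆ S, and let γ be a real number with 0 < γ < 1. For every state s ∉ G with D(s) ≠ ∅, the optimal binary-reward value satisfies V_bin*(s) = γ · sSup { V_bin*(s') : step s s' and D(s') ≠ ∅ }, where the supremum over goal-reaching successors is taken in ℝ. -/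
lemma not_reachesIn_zero {S : Type*} {step : S → S → Prop} {G : Set S} {s : S}
    (hs : s ∉ G) : ¬ ReachesIn step G s 0 := by
  rintro ⟨f, h0, -, hG⟩
  exact hs (by rwa [show Fin.last 0 = 0 from rfl, h0] at hG)

lemma vbin_eq {S : Type*} (step : S → S → Prop) (G : Set S) {γ : ℝ}
    (hγ0 : 0 < γ) (hγ1 : γ < 1) (s : S) (hne : (DistSet step G s).Nonempty) :
    Vbin step G γ s = γ ^ (((sInf (DistSet step G s) : ℕ) : ℤ) - 1) := by
  refine IsGreatest.csSup_eq ⟨⟨sInf (DistSet step G s), Nat.sInf_mem hne, rfl⟩, ?_⟩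
  rintro x ⟨n, hn, rfl⟩
  apply zpow_le_zpow_right_of_le_one₀ hγ0 hγ1.le
  have := Nat.sInf_le hn
  omega
theorem stmt_9 {S : Type*} (step : S → S → Prop) (G : Set S) (γ : ℝ)
    (hγ0 : 0 < γ) (hγ1 : γ < 1) (s : S) (hs : s ∉ G)
    (hne : (DistSet step G s).Nonempty) :
    Vbin step G γ s =
      γ * sSup {x : ℝ | ∃ s' : S, step s s' ∧ (DistSet step G s').Nonempty ∧
        x = Vbin step G γ s'} := by
  have hN : sInf (DistSet step G s) ∈ DistSet step G s := Nat.sInf_mem hne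
  have h0 : sInf (DistSet step G s) ≠ 0 := by
    intro h0
    rw [h0] at hN
    exact not_reachesIn_zero hs hN
  obtain ⟨m, hm⟩ : ∃ m, sInf (DistSet step G s) = m + 1 :=
    Nat.exists_eq_succ_of_ne_zero h0
  rw [hm] at hN
  obtain ⟨s₀, hstep₀, hm₀⟩ := (reachesIn_succ_iff step G s m).mp hN
  -- key: for any successor s' with k ∈ D(s'), m ≤ k is false in general but m+1 ≤ k+1 via sInf
  have key : ∀ s' : S, step s s' → ∀ k ∈ DistSet step G s', m ≤ k := by
    intro s' hss' k hk
    have : k + 1 ∈ DistSet step G s := (reachesIn_succ_iff step G s k).mpr ⟨s', hss', hk⟩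
    have := Nat.sInf_le this
    omega
  have hsup : sSup {x : ℝ | ∃ s' : S, step s s' ∧ (DistSet step G s').Nonempty ∧
      x = Vbin step G γ s'} = γ ^ ((m : ℤ) - 1) := by
    refine IsGreatest.csSup_eq ⟨⟨s₀, hstep₀, ⟨m, hm₀⟩, ?_⟩, ?_⟩
    · rw [vbin_eq step G hγ0 hγ1 s₀ ⟨m, hm₀⟩]
      congr 2
      have h1 : sInf (DistSet step G s₀) ≤ m := Nat.sInf_le hm₀
      have h2 : m ≤ sInf (DistSet step G s₀) :=
        key s₀ hstep₀ _ (Nat.sInf_mem ⟨m, hm₀⟩)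
      omega
    · rintro x ⟨s', hss', hne', rfl⟩
      rw [vbin_eq step G hγ0 hγ1 s' hne']
      apply zpow_le_zpow_right_of_le_one₀ hγ0 hγ1.le
      have := key s' hss' _ (Nat.sInf_mem hne')
      omega
  rw [vbin_eq step G hγ0 hγ1 s hne, hm, hsup, ← zpow_one_add₀ hγ0.ne']
  congr 1
  push_cast
  ring
end
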